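/- Suppose nonnegative integers a₁, a₂, b, and reals f₀ > 0, F₁ = f(1), F₂ = f(−cos 2θ₀) satisfy that the polynomial bound (a₁+2a₂+2b)²·f₀ ≤ (a₁+2a₂+2b)·F₁ + 2a₂·F₂ holds. Show the abstract step of Theorem 4: if P ⊂ S^{n-1} is a 60°-code in the closed upper hemisphere, P_{a₂} = {p ∈ P : π/3 ≤ dist(p,N) ≤ θ₀}, P_b = {p ∈ P : dist(p,N) < π/3}, then the set P ∪ P_{a₂}' ∪ P_b' (reflections across the equator) has pairwise angular distances ≥ π/3 except possibly for the pairs (p, p') with p ∈ P_{a₂}, which satisfy dist(p, p') ≥ π − 2θ₀. -/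

import Mathlib

open Real
open scoped RealInnerProductSpace
open scoped Classical

/-- Reflection of a point of `ℝ^{n+1}` across the hyperplane where the last
coordinate vanishes. -/
def reflLast (n : ℕ) (p : EuclideanSpace ℝ (Fin (n + 1))) :
    EuclideanSpace ℝ (Fin (n + 1)) :=
  WithLp.toLp 2 (fun i => if i = Fin.last n then -(p i) else p i)

/-!
Reflecting one point of the upper hemisphere across the equator only lowers its inner
product with another upper point, so reflected points keep distance `≥ π/3` from all other
points of the code, and reflected points among themselves are an isometric copy of the code.
The only new short distances are `dist(p, p') = π - 2 dist(p, N)`, which is `> π/3` when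
`dist(p, N) < π/3` and `≥ π - 2θ₀` when `dist(p, N) ≤ θ₀`.
-/

section Reflection

variable {n : ℕ}

theorem inner_reflLast_right (p q : EuclideanSpace ℝ (Fin (n + 1))) :
    ⟪p, reflLast n q⟫ = ⟪p, q⟫ - 2 * (p (Fin.last n) * q (Fin.last n)) := by
  simp only [PiLp.inner_apply, RCLike.inner_apply, conj_trivial, reflLast]
  rw [← Finset.add_sum_erase _ _ (Finset.mem_univ (Fin.last n)),
    ← Finset.add_sum_erase _ _ (Finset.mem_univ (Fin.last n)),
    Finset.sum_congr rfl fun i hi => by rw [if_neg (Finset.ne_of_mem_erase hi)]]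
  simp only [if_pos]
  ring

theorem inner_reflLast_reflLast (p q : EuclideanSpace ℝ (Fin (n + 1))) :
    ⟪reflLast n p, reflLast n q⟫ = ⟪p, q⟫ := by
  simp only [PiLp.inner_apply, RCLike.inner_apply, conj_trivial, reflLast]
  exact Finset.sum_congr rfl fun i _ => by split <;> ring

theorem inner_reflLast_le_inner {p q : EuclideanSpace ℝ (Fin (n + 1))}
    (hp : 0 ≤ p (Fin.last n)) (hq : 0 ≤ q (Fin.last n)) :
    ⟪p, reflLast n q⟫ ≤ ⟪p, q⟫ := by
  rw [inner_reflLast_right]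
  linarith [mul_nonneg hp hq]

theorem arccos_inner_reflLast_self {q : EuclideanSpace ℝ (Fin (n + 1))} (hq : ‖q‖ = 1)
    (hlast : 0 ≤ q (Fin.last n)) :
    arccos ⟪q, reflLast n q⟫ = π - 2 * arccos (q (Fin.last n)) := by
  have hbound : |q (Fin.last n)| ≤ 1 := by
    simpa only [Real.norm_eq_abs, hq] using PiLp.norm_apply_le q (Fin.last n)
  have hcos : cos (arccos (q (Fin.last n))) = q (Fin.last n) :=
    cos_arccos (abs_le.1 hbound).1 (abs_le.1 hbound).2
  have hinner : ⟪q, reflLast n q⟫ = cos (π - 2 * arccos (q (Fin.last n))) := by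
    rw [inner_reflLast_right, real_inner_self_eq_norm_sq, hq, cos_pi_sub, cos_two_mul, hcos]
    ring
  rw [hinner, arccos_cos (by linarith [arccos_le_pi_div_two.2 hlast])
    (by linarith [arccos_nonneg (q (Fin.last n))])]

end Reflection

theorem le_arccos_inner_reflLast_or_eq_self {n : ℕ} {P : Set (EuclideanSpace ℝ (Fin (n + 1)))}
    (hnorm : ∀ p ∈ P, ‖p‖ = 1) (hhemi : ∀ p ∈ P, 0 ≤ p (Fin.last n))
    (hcode : ∀ p ∈ P, ∀ q ∈ P, p ≠ q → π / 3 ≤ arccos ⟪p, q⟫)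
    {p q : EuclideanSpace ℝ (Fin (n + 1))} (hp : p ∈ P) (hq : q ∈ P) :
    π / 3 ≤ arccos ⟪p, reflLast n q⟫ ∨
      (p = q ∧ π / 3 ≤ arccos (q (Fin.last n)) ∧
        arccos ⟪p, reflLast n q⟫ = π - 2 * arccos (q (Fin.last n))) := by
  by_cases hpq : p = q
  · subst hpq
    have hself := arccos_inner_reflLast_self (hnorm p hp) (hhemi p hp)
    by_cases hfar : π / 3 ≤ arccos (p (Fin.last n))
    · exact Or.inr ⟨rfl, hfar, hself⟩
    · exact Or.inl (by rw [hself]; linarith)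
  · exact Or.inl ((hcode p hp q hq hpq).trans
      (arccos_le_arccos (inner_reflLast_le_inner (hhemi p hp) (hhemi q hq))))

theorem theorem4_doubling_step (n : ℕ) (θ₀ : ℝ)
    (hθ₀ : θ₀ ∈ Set.Ioo (π / 3) (π / 2))
    (P : Finset (EuclideanSpace ℝ (Fin (n + 1))))
    (hnorm : ∀ p ∈ P, ‖p‖ = 1)
    (hhemi : ∀ p ∈ P, 0 ≤ p (Fin.last n))
    (hcode : ∀ p ∈ P, ∀ q ∈ P, p ≠ q → π / 3 ≤ Real.arccos ⟪p, q⟫)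
    (Pa₂ Pb : Finset (EuclideanSpace ℝ (Fin (n + 1))))
    (hPa₂ : Pa₂ = P.filter (fun p =>
      π / 3 ≤ Real.arccos (p (Fin.last n)) ∧ Real.arccos (p (Fin.last n)) ≤ θ₀))
    (hPb : Pb = P.filter (fun p => Real.arccos (p (Fin.last n)) < π / 3))
    (T : Finset (EuclideanSpace ℝ (Fin (n + 1))))
    (hT : T = P ∪ Pa₂.image (reflLast n) ∪ Pb.image (reflLast n)) :
    ∀ x ∈ T, ∀ y ∈ T, x ≠ y →
      π / 3 ≤ Real.arccos ⟪x, y⟫ ∨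
      (∃ p ∈ Pa₂, ((x = p ∧ y = reflLast n p) ∨ (y = p ∧ x = reflLast n p)) ∧
        π - 2 * θ₀ ≤ Real.arccos ⟪x, y⟫) := by
  have hlow : ∀ q ∈ Pa₂ ∪ Pb, q ∈ P ∧ arccos (q (Fin.last n)) ≤ θ₀ := by
    rw [hPa₂, hPb, ← Finset.filter_or]
    rintro q hq
    rcases Finset.mem_filter.1 hq with ⟨hqP, ⟨-, h⟩ | h⟩
    exacts [⟨hqP, h⟩, ⟨hqP, by linarith [hθ₀.1]⟩]
  have hpair : ∀ p ∈ P, ∀ q ∈ Pa₂ ∪ Pb, π / 3 ≤ arccos ⟪p, reflLast n q⟫ ∨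
      (p = q ∧ p ∈ Pa₂ ∧ π - 2 * θ₀ ≤ arccos ⟪p, reflLast n q⟫) := by
    intro p hp q hq
    obtain ⟨hqP, hqθ⟩ := hlow q hq
    refine (le_arccos_inner_reflLast_or_eq_self (P := ↑P) hnorm hhemi hcode hp hqP).imp id ?_
    rintro ⟨rfl, hfar, hdist⟩
    exact ⟨rfl, hPa₂ ▸ Finset.mem_filter.2 ⟨hp, hfar, hqθ⟩, by rw [hdist]; linarith⟩
  rw [hT, Finset.union_assoc, ← Finset.image_union]
  intro x hx y hy hxy
  rcases Finset.mem_union.1 hx with hx | hx <;> rcases Finset.mem_union.1 hy with hy | hy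
  · exact Or.inl (hcode x hx y hy hxy)
  · obtain ⟨q, hq, rfl⟩ := Finset.mem_image.1 hy
    exact (hpair x hx q hq).imp id fun ⟨hxq, hxA, h⟩ => ⟨x, hxA, Or.inl ⟨rfl, hxq ▸ rfl⟩, h⟩
  · obtain ⟨q, hq, rfl⟩ := Finset.mem_image.1 hx
    rw [real_inner_comm]
    exact (hpair y hy q hq).imp id fun ⟨hyq, hyA, h⟩ => ⟨y, hyA, Or.inr ⟨rfl, hyq ▸ rfl⟩, h⟩
  · obtain ⟨p, hp, rfl⟩ := Finset.mem_image.1 hx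
    obtain ⟨q, hq, rfl⟩ := Finset.mem_image.1 hy
    rw [inner_reflLast_reflLast]
    exact Or.inl (hcode p (hlow p hp).1 q (hlow q hq).1 fun h => hxy (h ▸ rfl))
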